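/- For θ ∈ [0, π/2] let |φ_z(θ)⟩ := cos(θ/2)|00⟩ + sin(θ/2)|11⟩, and let Ω ∈ [0, 4/3]. Then applying the phase-flip channel E³_Ω to each qubit yields M[(E³_Ω ⊗ E³_Ω)(|φ_z(θ)⟩⟨φ_z(θ)|)] = max(0, (1 − 3Ω/2)²·M₀), where M₀ := M(|φ_z(θ)⟩⟨φ_z(θ)|) = sin θ. (This is the upper bound of entanglement reduction under local Pauli channels of average Ω.) -/

import Mathlib

open Matrix Kronecker
open scoped ComplexOrder

noncomputable section

/-- 2×2 complex matrices (one qubit). -/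
abbrev Mat2 := Matrix (Fin 2) (Fin 2) ℂ

/-- 4×4 complex matrices indexed by `(Fin 2) × (Fin 2)` (two qubits). -/
abbrev Mat4 := Matrix (Fin 2 × Fin 2) (Fin 2 × Fin 2) ℂ

/-- The identity and the three Pauli matrices: σ₀, σ₁, σ₂, σ₃. -/
def pauli : Fin 4 → Mat2 :=
  ![1, !![0, 1; 1, 0], !![0, -Complex.I; Complex.I, 0], !![1, 0; 0, -1]]

/-- Weights `(p₀, p₁, p₂, p₃)` with `p₀ := 4 - (p₁ + p₂ + p₃)`. -/
def pw (p : Fin 3 → ℝ) : Fin 4 → ℝ := ![4 - (p 0 + p 1 + p 2), p 0, p 1, p 2]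

/-- Single-qubit Pauli channel `E_p(ρ) = Σ_k (p_k/4) σ_k ρ σ_k`. -/
def pauliCh (p : Fin 3 → ℝ) (ρ : Mat2) : Mat2 :=
  ∑ k : Fin 4, ((pw p k / 4 : ℝ) : ℂ) • (pauli k * ρ * pauli k)

/-- `E_p ⊗ id` acting on two-qubit matrices. -/
def pauliFst (p : Fin 3 → ℝ) (ρ : Mat4) : Mat4 :=
  ∑ k : Fin 4, ((pw p k / 4 : ℝ) : ℂ) • ((pauli k ⊗ₖ 1) * ρ * (pauli k ⊗ₖ 1))

/-- Local Pauli channel `E_p ⊗ E_p'` acting on two-qubit matrices. -/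
def pauliLoc (p p' : Fin 3 → ℝ) (ρ : Mat4) : Mat4 :=
  ∑ k : Fin 4, ∑ l : Fin 4,
    ((pw p k * pw p' l / 16 : ℝ) : ℂ) •
      ((pauli k ⊗ₖ pauli l) * ρ * (pauli k ⊗ₖ pauli l))

/-- Partial transpose on the first qubit. -/
def ptranspose (ρ : Mat4) : Mat4 := fun x y => ρ (y.1, x.2) (x.1, y.2)

/-- Smallest (real) eigenvalue of a matrix. -/
def lambdaMin (A : Mat4) : ℝ :=
  sInf {c : ℝ | ∃ v : Fin 2 × Fin 2 → ℂ, v ≠ 0 ∧ A *ᵥ v = (c : ℂ) • v}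

/-- Measure of entanglement `M(ρ) = max (0, −2 λ_min(ρ^{T₁}))`. -/
def entMeasure (ρ : Mat4) : ℝ := max 0 (-2 * lambdaMin (ptranspose ρ))

/-- Two-qubit density matrix. -/
def IsDensity (ρ : Mat4) : Prop := ρ.PosSemidef ∧ ρ.trace = 1

/-- Depolarizing channel `D_q(ρ) = (1−q)·tr(ρ)·I/2 + q·ρ`. -/
def depol (q : ℝ) (ρ : Mat2) : Mat2 :=
  (((1 - q : ℝ) : ℂ) * ρ.trace / 2) • (1 : Mat2) + ((q : ℝ) : ℂ) • ρ

/-- Basis vector `|ij⟩` of the two-qubit space. -/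
def ket2 (i j : Fin 2) : (Fin 2 × Fin 2) → ℂ := fun x => if x = (i, j) then 1 else 0

/-- The four Bell states `|Ψ⁰⟩, |Ψ¹⟩, |Ψ²⟩, |Ψ³⟩`. -/
def bell : Fin 4 → ((Fin 2 × Fin 2) → ℂ) :=
  ![(((Real.sqrt 2 : ℝ) : ℂ))⁻¹ • (ket2 0 0 + ket2 1 1),
    (((Real.sqrt 2 : ℝ) : ℂ))⁻¹ • (ket2 0 1 + ket2 1 0),
    (((Real.sqrt 2 : ℝ) : ℂ) * Complex.I)⁻¹ • (ket2 0 1 - ket2 1 0),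
    (((Real.sqrt 2 : ℝ) : ℂ))⁻¹ • (ket2 0 0 - ket2 1 1)]

/-- Rank-one projector `|ψ⟩⟨ψ|`. -/
def proj (ψ : (Fin 2 × Fin 2) → ℂ) : Mat4 := fun a b => ψ a * (starRingEnd ℂ) (ψ b)

/-- Pauli-channel probability vector of the phase-flip channel `E³_Ω`. -/
def phaseVec (Ω : ℝ) : Fin 3 → ℝ := ![0, 0, 3 * Ω]

/-- The Schmidt-form pure state `|φ_z(θ)⟩ = cos(θ/2)|00⟩ + sin(θ/2)|11⟩`. -/
def phiZ (θ : ℝ) : (Fin 2 × Fin 2) → ℂ :=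
  ((Real.cos (θ / 2) : ℝ) : ℂ) • ket2 0 0 + ((Real.sin (θ / 2) : ℝ) : ℂ) • ket2 1 1


/-- Helper matrix: diag `(a,0,0,b)` with `t` in the `(0,1)/(1,0)` anti-diagonal block. -/
def Aform (a b t : ℝ) : Mat4 := fun x y =>
  if x = (0,0) ∧ y = (0,0) then (a : ℂ)
  else if x = (1,1) ∧ y = (1,1) then (b : ℂ)
  else if (x = (0,1) ∧ y = (1,0)) ∨ (x = (1,0) ∧ y = (0,1)) then (t : ℂ)
  else 0

/-- Helper matrix: diag `(a,0,0,b)` with corners `t` at `((0,0),(1,1))` and `((1,1),(0,0))`. -/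
def Bform (a b t : ℝ) : Mat4 := fun x y =>
  if x = (0,0) ∧ y = (0,0) then (a : ℂ)
  else if x = (1,1) ∧ y = (1,1) then (b : ℂ)
  else if (x = (0,0) ∧ y = (1,1)) ∨ (x = (1,1) ∧ y = (0,0)) then (t : ℂ)
  else 0

lemma mulVec_Aform (a b t : ℝ) (v : (Fin 2 × Fin 2) → ℂ) (x : Fin 2 × Fin 2) :
    (Aform a b t *ᵥ v) x =
      if x = (0,0) then (a : ℂ) * v (0,0)
      else if x = (1,1) then (b : ℂ) * v (1,1)
      else if x = (0,1) then (t : ℂ) * v (1,0)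
      else (t : ℂ) * v (0,1) := by
  obtain ⟨i, j⟩ := x
  fin_cases i <;> fin_cases j <;>
    simp [Matrix.mulVec, dotProduct, Fintype.sum_prod_type, Fin.sum_univ_two, Aform,
      Prod.ext_iff]

lemma lambdaMin_Aform (a b t : ℝ) (ha : 0 ≤ a) (hb : 0 ≤ b) (ht : 0 ≤ t) :
    lambdaMin (Aform a b t) = -t := by
  have hmem : (-t) ∈ {c : ℝ | ∃ v : Fin 2 × Fin 2 → ℂ, v ≠ 0 ∧
      Aform a b t *ᵥ v = (c : ℂ) • v} := by
    refine ⟨fun x => if x = (0,1) then 1 else if x = (1,0) then -1 else 0, ?_, ?_⟩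
    · intro h
      have := congrFun h (0,1)
      simp at this
    · funext x
      rw [mulVec_Aform]
      obtain ⟨i, j⟩ := x
      fin_cases i <;> fin_cases j <;> simp [Prod.ext_iff]
  have hlb : ∀ c ∈ {c : ℝ | ∃ v : Fin 2 × Fin 2 → ℂ, v ≠ 0 ∧
      Aform a b t *ᵥ v = (c : ℂ) • v}, -t ≤ c := by
    rintro c ⟨v, hv, hAv⟩
    have e1 : (a : ℂ) * v (0,0) = (c : ℂ) * v (0,0) := by
      have := congrFun hAv (0,0); rw [mulVec_Aform] at this; simpa using this
    have e2 : (b : ℂ) * v (1,1) = (c : ℂ) * v (1,1) := by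
      have := congrFun hAv (1,1); rw [mulVec_Aform] at this; simpa [Prod.ext_iff] using this
    have e3 : (t : ℂ) * v (1,0) = (c : ℂ) * v (0,1) := by
      have := congrFun hAv (0,1); rw [mulVec_Aform] at this; simpa [Prod.ext_iff] using this
    have e4 : (t : ℂ) * v (0,1) = (c : ℂ) * v (1,0) := by
      have := congrFun hAv (1,0); rw [mulVec_Aform] at this; simpa [Prod.ext_iff] using this
    have hx : ∃ x, v x ≠ 0 := by
      by_contra h
      push_neg at h
      exact hv (funext fun x => h x)
    obtain ⟨⟨i, j⟩, hx⟩ := hx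
    have sq_case : ∀ z : ℂ, z ≠ 0 → ((t : ℂ))^2 * z = ((c : ℂ))^2 * z → -t ≤ c := by
      intro z hz hsq
      have h2 : ((t : ℂ))^2 = ((c : ℂ))^2 := by
        exact mul_right_cancel₀ hz hsq
      have h3 : t^2 = c^2 := by
        have := h2
        push_cast at this
        exact_mod_cast this
      have : (c - t) * (c + t) = 0 := by nlinarith
      rcases mul_eq_zero.mp this with h | h <;> nlinarith
    fin_cases i <;> fin_cases j
    · have : (a : ℂ) = (c : ℂ) := mul_right_cancel₀ hx e1
      have hac : a = c := by exact_mod_cast this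
      linarith
    · refine sq_case (v (0,1)) hx ?_
      calc ((t:ℂ))^2 * v (0,1) = (t:ℂ) * ((t:ℂ) * v (0,1)) := by ring
        _ = (t:ℂ) * ((c:ℂ) * v (1,0)) := by rw [e4]
        _ = (c:ℂ) * ((t:ℂ) * v (1,0)) := by ring
        _ = (c:ℂ) * ((c:ℂ) * v (0,1)) := by rw [e3]
        _ = ((c:ℂ))^2 * v (0,1) := by ring
    · refine sq_case (v (1,0)) hx ?_
      calc ((t:ℂ))^2 * v (1,0) = (t:ℂ) * ((t:ℂ) * v (1,0)) := by ring
        _ = (t:ℂ) * ((c:ℂ) * v (0,1)) := by rw [e3]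
        _ = (c:ℂ) * ((t:ℂ) * v (0,1)) := by ring
        _ = (c:ℂ) * ((c:ℂ) * v (1,0)) := by rw [e4]
        _ = ((c:ℂ))^2 * v (1,0) := by ring
    · have : (b : ℂ) = (c : ℂ) := mul_right_cancel₀ hx e2
      have hbc : b = c := by exact_mod_cast this
      linarith
  exact le_antisymm (csInf_le ⟨-t, hlb⟩ hmem) (le_csInf ⟨-t, hmem⟩ hlb)

lemma proj_phiZ_eq (θ : ℝ) :
    proj (phiZ θ) = Bform (Real.cos (θ/2)^2) (Real.sin (θ/2)^2)
      (Real.cos (θ/2) * Real.sin (θ/2)) := by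
  funext x y
  obtain ⟨i, j⟩ := x; obtain ⟨k, l⟩ := y
  fin_cases i <;> fin_cases j <;> fin_cases k <;> fin_cases l <;>
    simp [proj, phiZ, ket2, Bform, Prod.ext_iff, Complex.conj_ofReal, ← Complex.ofReal_cos,
      ← Complex.ofReal_sin] <;> push_cast <;> ring

lemma pt_Bform (a b t : ℝ) : ptranspose (Bform a b t) = Aform a b t := by
  funext x y
  obtain ⟨i, j⟩ := x; obtain ⟨k, l⟩ := y
  fin_cases i <;> fin_cases j <;> fin_cases k <;> fin_cases l <;>
    simp [ptranspose, Bform, Aform, Prod.ext_iff]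

set_option maxHeartbeats 1000000 in
lemma loc_Bform (Ω a b t : ℝ) :
    pauliLoc (phaseVec Ω) (phaseVec Ω) (Bform a b t)
      = Bform a b ((1 - 3*Ω/2)^2 * t) := by
  funext x y
  obtain ⟨i, j⟩ := x; obtain ⟨k, l⟩ := y
  fin_cases i <;> fin_cases j <;> fin_cases k <;> fin_cases l <;>
    simp [pauliLoc, pauli, pw, phaseVec, Matrix.mul_apply, Fin.sum_univ_four,
      Fintype.sum_prod_type, Fin.sum_univ_two, Matrix.one_apply, Bform, Prod.ext_iff] <;>
    push_cast <;> ring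

/-- upper bound of entanglement reduction — Schmidt-form state
through local phase-flip channels. -/
theorem entMeasure_phaseflip_upper (θ Ω : ℝ)
    (hθ : θ ∈ Set.Icc (0 : ℝ) (Real.pi / 2)) (hΩ : Ω ∈ Set.Icc (0 : ℝ) (4/3)) :
    entMeasure (proj (phiZ θ)) = Real.sin θ ∧
    entMeasure (pauliLoc (phaseVec Ω) (phaseVec Ω) (proj (phiZ θ)))
      = max 0 ((1 - 3 * Ω / 2) ^ 2 * Real.sin θ) := by
  obtain ⟨hθ0, hθ1⟩ := hθ
  obtain ⟨hΩ0, hΩ1⟩ := hΩ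
  have hpi := Real.pi_pos
  have hc : 0 ≤ Real.cos (θ/2) :=
    Real.cos_nonneg_of_mem_Icc ⟨by linarith, by linarith⟩
  have hs : 0 ≤ Real.sin (θ/2) :=
    Real.sin_nonneg_of_nonneg_of_le_pi (by linarith) (by linarith)
  have hsin : Real.sin θ = 2 * Real.sin (θ/2) * Real.cos (θ/2) := by
    rw [show θ = 2*(θ/2) by ring, Real.sin_two_mul]
    ring_nf
  have hsnn : 0 ≤ Real.sin θ := by rw [hsin]; positivity
  constructor
  · rw [entMeasure, proj_phiZ_eq, pt_Bform,
      lambdaMin_Aform _ _ _ (sq_nonneg _) (sq_nonneg _) (mul_nonneg hc hs)]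
    rw [hsin] at hsnn
    rw [max_eq_right (by linarith)]
    rw [hsin]; ring
  · rw [entMeasure, proj_phiZ_eq, loc_Bform, pt_Bform,
      lambdaMin_Aform _ _ _ (sq_nonneg _) (sq_nonneg _)
        (mul_nonneg (sq_nonneg _) (mul_nonneg hc hs))]
    congr 1
    rw [hsin]; ring
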